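/- arXiv:gr-qc/0111022 — 2 statements merged into one kernel-verified Lean document; each statement's English description precedes it below -/
import Mathlib

section
/- Let G be a compact topological group with normalized Haar probability measure μ. Let V and W be finite-dimensional complex normed vector spaces carrying continuous representations ρ : G → GL(V) and ρ' : G → GL(W), and let ρ ⊗ ρ' denote the tensor product representation on V ⊗ W. Then the averaging maps satisfy (T_ρ ⊗ id_W) ∘ T_{ρ⊗ρ'} = T_ρ ⊗ T_{ρ'} as linear maps V ⊗ W → V ⊗ W, where T_σ denotes the map u ↦ ∫_G σ(g)u dμ(g) for a representation σ. -/
open MeasureTheory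

/-!
Haar measure on a compact group is also right invariant, so the averaging map absorbs the
representation: `T_ρ (ρ g v) = T_ρ v`. Applying `T_ρ ⊗ id` under the integral therefore turns the
integrand `ρ g v ⊗ ρ' g w` into `T_ρ v ⊗ ρ' g w`, and integrating the second factor gives
`T_ρ v ⊗ T_ρ' w`.
-/

theorem MeasureTheory.Measure.isMulRightInvariant_of_isHaarMeasure_of_isProbabilityMeasure
    {G : Type*} [Group G] [TopologicalSpace G] [IsTopologicalGroup G] [LocallyCompactSpace G]
    [MeasurableSpace G] [BorelSpace G] (μ : Measure G) [μ.IsHaarMeasure] [IsProbabilityMeasure μ] :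
    μ.IsMulRightInvariant where
  map_mul_right_eq_self g :=
    have : IsProbabilityMeasure (μ.map (· * g)) :=
      isProbabilityMeasure_map (measurable_mul_const g).aemeasurable
    Measure.isHaarMeasure_eq_of_isProbabilityMeasure _ μ

theorem LinearMap.continuous_uncurry_of_finiteDimensional {𝕜 : Type*} [NontriviallyNormedField 𝕜]
    [CompleteSpace 𝕜] {E F H : Type*}
    [NormedAddCommGroup E] [NormedSpace 𝕜 E] [FiniteDimensional 𝕜 E]
    [NormedAddCommGroup F] [NormedSpace 𝕜 F] [FiniteDimensional 𝕜 F]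
    [NormedAddCommGroup H] [NormedSpace 𝕜 H] (t : E →ₗ[𝕜] F →ₗ[𝕜] H) :
    Continuous fun p : E × F => t p.1 p.2 :=
  (LinearMap.toContinuousLinearMap
    (LinearMap.toContinuousLinearMap.toLinearMap ∘ₗ t : E →ₗ[𝕜] F →L[𝕜] H)).continuous₂

theorem MeasureTheory.integral_monoidHom_apply_apply {G : Type*} [Group G] [MeasurableSpace G]
    [MeasurableMul G] (μ : Measure G) [μ.IsMulRightInvariant] {R V : Type*} [Semiring R]
    [NormedAddCommGroup V] [NormedSpace ℝ V] [Module R V] (ρ : G →* (V ≃L[R] V)) (h : G) (v : V) :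
    ∫ g, ρ g (ρ h v) ∂μ = ∫ g, ρ g v ∂μ :=
  calc ∫ g, ρ g (ρ h v) ∂μ = ∫ g, ρ (g * h) v ∂μ := by simp only [map_mul]; rfl
    _ = ∫ g, ρ g v ∂μ := integral_mul_right_eq_self (fun g => ρ g v) h

theorem averaging_tensor_identity'_general
    {G : Type*} [Group G] [TopologicalSpace G] [IsTopologicalGroup G]
    [CompactSpace G] [MeasurableSpace G] [BorelSpace G]
    (μ : Measure G) [μ.IsHaarMeasure] [IsProbabilityMeasure μ]
    {V : Type*} [NormedAddCommGroup V] [NormedSpace ℂ V] [FiniteDimensional ℂ V]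
    {W : Type*} [NormedAddCommGroup W] [NormedSpace ℂ W] [FiniteDimensional ℂ W]
    {U : Type*} [NormedAddCommGroup U] [NormedSpace ℂ U]
    (t : V →ₗ[ℂ] W →ₗ[ℂ] U) (ht : Function.Bijective (TensorProduct.lift t))
    (ρ : G →* (V ≃L[ℂ] V)) (hρ : ∀ v : V, Continuous fun g => ρ g v)
    (ρ' : G →* (W ≃L[ℂ] W)) (hρ' : ∀ w : W, Continuous fun g => ρ' g w)
    (S : V →ₗ[ℂ] V) (hS : ∀ v : V, S v = ∫ g, ρ g v ∂μ)
    (P : U →ₗ[ℂ] U) (hP : ∀ (v : V) (w : W), P (t v w) = t (S v) w) :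
    ∀ (v : V) (w : W),
      P (∫ g, t (ρ g v) (ρ' g w) ∂μ) =
        t (∫ g, ρ g v ∂μ) (∫ g, ρ' g w ∂μ) := by
  have : FiniteDimensional ℂ U := Module.Finite.of_surjective _ ht.surjective
  have := μ.isMulRightInvariant_of_isHaarMeasure_of_isProbabilityMeasure
  intro v w
  have hSρ (g : G) : S (ρ g v) = S v := by
    rw [hS, hS, integral_monoidHom_apply_apply]
  have hint : Integrable (fun g => t (ρ g v) (ρ' g w)) μ :=
    (t.continuous_uncurry_of_finiteDimensional.comp ((hρ v).prodMk (hρ' w)))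
      |>.integrable_of_hasCompactSupport (.of_compactSpace _)
  have hint' : Integrable (fun g => ρ' g w) μ :=
    (hρ' w).integrable_of_hasCompactSupport (.of_compactSpace _)
  calc P (∫ g, t (ρ g v) (ρ' g w) ∂μ)
      = ∫ g, P (t (ρ g v) (ρ' g w)) ∂μ :=
        (P.toContinuousLinearMap.integral_comp_comm hint).symm
    _ = ∫ g, t (S v) (ρ' g w) ∂μ := by simp only [hP, hSρ]
    _ = t (S v) (∫ g, ρ' g w ∂μ) := (t (S v)).toContinuousLinearMap.integral_comp_comm hint'
    _ = t (∫ g, ρ g v ∂μ) (∫ g, ρ' g w ∂μ) := by rw [hS]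

/-- The identity `(T_ρ ⊗ id_W) ∘ T_{ρ⊗ρ'} = T_ρ ⊗ T_{ρ'}` as linear maps
`V ⊗ W → V ⊗ W`.

The tensor product `V ⊗ W` is modelled by a normed space `U` together with a
bilinear map `t : V → W → U` whose lift `V ⊗[ℂ] W →ₗ[ℂ] U` is bijective.
`S` is the averaging map `T_ρ` (as a linear map) and `P` is the linear map
`T_ρ ⊗ id_W` on `U`, characterized by `P (v ⊗ w) = (S v) ⊗ w`.  Since linear
maps on `V ⊗ W` are determined by their values on pure tensors, the asserted
equality of linear maps is stated on all pure tensors: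
`P (T_{ρ⊗ρ'}(v ⊗ w)) = (T_ρ v) ⊗ (T_{ρ'} w)`. -/
theorem averaging_tensor_identity'
    {G : Type*} [Group G] [TopologicalSpace G] [IsTopologicalGroup G]
    [CompactSpace G] [T2Space G] [MeasurableSpace G] [BorelSpace G]
    (μ : Measure G) [μ.IsHaarMeasure] [IsProbabilityMeasure μ]
    {V : Type*} [NormedAddCommGroup V] [NormedSpace ℂ V] [FiniteDimensional ℂ V]
    {W : Type*} [NormedAddCommGroup W] [NormedSpace ℂ W] [FiniteDimensional ℂ W]
    {U : Type*} [NormedAddCommGroup U] [NormedSpace ℂ U]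
    (t : V →ₗ[ℂ] W →ₗ[ℂ] U) (ht : Function.Bijective (TensorProduct.lift t))
    (ρ : G →* (V ≃L[ℂ] V)) (hρ : ∀ v : V, Continuous fun g => ρ g v)
    (ρ' : G →* (W ≃L[ℂ] W)) (hρ' : ∀ w : W, Continuous fun g => ρ' g w)
    (S : V →ₗ[ℂ] V) (hS : ∀ v : V, S v = ∫ g, ρ g v ∂μ)
    (P : U →ₗ[ℂ] U) (hP : ∀ (v : V) (w : W), P (t v w) = t (S v) w) :
    ∀ (v : V) (w : W),
      P (∫ g, t (ρ g v) (ρ' g w) ∂μ) =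
        t (∫ g, ρ g v ∂μ) (∫ g, ρ' g w ∂μ) :=
  averaging_tensor_identity'_general μ t ht ρ hρ ρ' hρ' S hS P hP
end

section
/- Let G be a compact topological group with normalized Haar probability measure μ, V a nonzero finite-dimensional complex normed vector space, and ρ : G → GL(V) a continuous irreducible representation. Then for every linear map B : V → V, the 'summation/loop' identity holds: ∫_G Tr(ρ(g) ∘ B) · ρ(g)⁻¹ dμ(g) = (1 / dim V) · B. -/
/-!
Averaging `ρ(g)⁻¹ ∘ A ∘ ρ(g)` over `G` gives an operator commuting with every `ρ(h)` (a Haar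
probability measure on a compact group is also right invariant), hence a scalar by Schur's lemma;
its trace is `Tr A`, so it equals `(Tr A / dim V) • 1`. Expanding the trace in a basis `b`,
`Tr(ρ(g) ∘ B) • ρ(g)⁻¹ v = ∑ i, ρ(g)⁻¹ (A_i (ρ(g) (B (b i))))` for the rank-one maps
`A_i x = b.coord i x • v` of trace `b.coord i v`, so the average is
`∑ i, (b.coord i v / dim V) • B (b i) = B v / dim V`.
-/

open MeasureTheory

theorem Module.End.exists_eq_smul_one_of_forall_commute {K V ι : Type*} [Field K] [IsAlgClosed K]
    [AddCommGroup V] [Module K V] [FiniteDimensional K V] [Nontrivial V]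
    (ρ : ι → Module.End K V)
    (hirr : ∀ U : Submodule K V, (∀ i, ∀ v ∈ U, ρ i v ∈ U) → U = ⊥ ∨ U = ⊤)
    (T : Module.End K V) (hT : ∀ i, Commute T (ρ i)) : ∃ c : K, T = c • 1 := by
  obtain ⟨c, hc⟩ := T.exists_eigenvalue
  refine ⟨c, ?_⟩
  rcases hirr _ (fun i => T.mapsTo_genEigenspace_of_comm (hT i) c 1) with h | h
  · exact absurd h hc
  · rwa [Module.End.genEigenspace_one, LinearMap.ker_eq_top, sub_eq_zero] at h

theorem MeasureTheory.Measure.isMulRightInvariant_of_isProbabilityMeasure {G : Type*} [Group G]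
    [TopologicalSpace G] [IsTopologicalGroup G] [CompactSpace G] [MeasurableSpace G] [BorelSpace G]
    (μ : Measure G) [μ.IsHaarMeasure] [IsProbabilityMeasure μ] : μ.IsMulRightInvariant := by
  refine ⟨fun g => ?_⟩
  have : IsProbabilityMeasure (μ.map (· * g)) :=
    isProbabilityMeasure_map (measurable_mul_const g).aemeasurable
  exact Measure.isHaarMeasure_eq_of_isProbabilityMeasure _ _

section

variable (𝕜 V : Type*) [NontriviallyNormedField 𝕜] [CompleteSpace 𝕜] [NormedAddCommGroup V]
  [NormedSpace 𝕜 V] [FiniteDimensional 𝕜 V]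

noncomputable def ContinuousLinearMap.traceCLM : (V →L[𝕜] V) →L[𝕜] 𝕜 :=
  LinearMap.toContinuousLinearMap (LinearMap.trace 𝕜 V ∘ₗ ContinuousLinearMap.coeLM 𝕜)

@[simp]
theorem ContinuousLinearMap.traceCLM_apply (T : V →L[𝕜] V) :
    traceCLM 𝕜 V T = LinearMap.trace 𝕜 V T := rfl

end

theorem LinearMap.trace_eq_sum_coord {R M ι : Type*} [CommRing R] [AddCommGroup M] [Module R M]
    [Fintype ι] [DecidableEq ι] (b : Module.Basis ι R M) (f : M →ₗ[R] M) :
    LinearMap.trace R M f = ∑ i, b.coord i (f (b i)) := by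
  simp [LinearMap.trace_eq_matrix_trace R b, Matrix.trace, LinearMap.toMatrix_apply]

theorem Continuous.integrable_of_compactSpace {X E : Type*} [MeasurableSpace X]
    [TopologicalSpace X] [OpensMeasurableSpace X] [CompactSpace X] [NormedAddCommGroup E]
    {μ : Measure X} [IsFiniteMeasure μ] {f : X → E} (hf : Continuous f) : Integrable f μ :=
  hf.integrable_of_hasCompactSupport (HasCompactSupport.of_compactSpace f)

@[simp]
theorem ContinuousLinearEquiv.mul_apply {R M : Type*} [Semiring R] [AddCommMonoid M] [Module R M]
    [TopologicalSpace M] (e e' : M ≃L[R] M) (x : M) : (e * e') x = e (e' x) := rfl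

@[simp]
theorem ContinuousLinearEquiv.coe_inv {R M : Type*} [Semiring R] [AddCommMonoid M] [Module R M]
    [TopologicalSpace M] (e : M ≃L[R] M) : ⇑e⁻¹ = ⇑e.symm := rfl

namespace MonoidHom

variable {G : Type*} [Group G] [TopologicalSpace G]
  {V : Type*} [NormedAddCommGroup V] [NormedSpace ℂ V] [FiniteDimensional ℂ V]
  (ρ : G →* (V ≃L[ℂ] V))

theorem continuous_toContinuousLinearMap (hρ : ∀ v, Continuous fun g => ρ g v) :
    Continuous fun g => (ρ g : V →L[ℂ] V) :=
  continuous_clm_apply.2 hρ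

theorem continuous_inv_toContinuousLinearMap [IsTopologicalGroup G]
    (hρ : ∀ v, Continuous fun g => ρ g v) :
    Continuous fun g => (((ρ g)⁻¹ : V ≃L[ℂ] V) : V →L[ℂ] V) := by
  simp_rw [← map_inv]
  exact (ρ.continuous_toContinuousLinearMap hρ).comp continuous_inv

variable [IsTopologicalGroup G] [CompactSpace G] [MeasurableSpace G] [BorelSpace G]
  (μ : Measure G)

noncomputable def conjAverage (A : V →L[ℂ] V) : V →L[ℂ] V :=
  ∫ g, (((ρ g)⁻¹ : V ≃L[ℂ] V) : V →L[ℂ] V) ∘L A ∘L (ρ g : V →L[ℂ] V) ∂μ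

theorem integrable_conj [IsFiniteMeasure μ] (hρ : ∀ v, Continuous fun g => ρ g v)
    (A : V →L[ℂ] V) :
    Integrable (fun g => (((ρ g)⁻¹ : V ≃L[ℂ] V) : V →L[ℂ] V) ∘L A ∘L (ρ g : V →L[ℂ] V)) μ :=
  ((ρ.continuous_inv_toContinuousLinearMap hρ).clm_comp
    (continuous_const.clm_comp (ρ.continuous_toContinuousLinearMap hρ))).integrable_of_compactSpace

theorem conjAverage_apply [IsFiniteMeasure μ] (hρ : ∀ v, Continuous fun g => ρ g v)
    (A : V →L[ℂ] V) (v : V) :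
    ρ.conjAverage μ A v = ∫ g, (ρ g)⁻¹ (A (ρ g v)) ∂μ :=
  ContinuousLinearMap.integral_apply (ρ.integrable_conj μ hρ A) v

theorem conjAverage_apply_map [IsFiniteMeasure μ] [μ.IsMulRightInvariant]
    (hρ : ∀ v, Continuous fun g => ρ g v) (A : V →L[ℂ] V) (h : G) (v : V) :
    ρ.conjAverage μ A (ρ h v) = ρ h (ρ.conjAverage μ A v) := by
  rw [ρ.conjAverage_apply μ hρ, ρ.conjAverage_apply μ hρ,
    ← ContinuousLinearEquiv.integral_comp_comm,
    ← integral_mul_right_eq_self (fun g => ρ h ((ρ g)⁻¹ (A (ρ g v)))) h]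
  congr 1 with g
  simp

theorem trace_conjAverage [IsProbabilityMeasure μ] (hρ : ∀ v, Continuous fun g => ρ g v)
    (A : V →L[ℂ] V) :
    LinearMap.trace ℂ V (ρ.conjAverage μ A) = LinearMap.trace ℂ V A := by
  have hconj : ∀ g, LinearMap.trace ℂ V
      ((((ρ g)⁻¹ : V ≃L[ℂ] V) : V →L[ℂ] V) ∘L A ∘L (ρ g : V →L[ℂ] V)) = LinearMap.trace ℂ V A :=
    fun g => LinearMap.trace_conj' A (ρ g).symm.toLinearEquiv
  rw [← ContinuousLinearMap.traceCLM_apply, conjAverage,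
    ← (ContinuousLinearMap.traceCLM ℂ V).integral_comp_comm (ρ.integrable_conj μ hρ A)]
  simp only [ContinuousLinearMap.traceCLM_apply, hconj, integral_const, probReal_univ, one_smul]

theorem integrable_trace_comp_smul_inv [IsFiniteMeasure μ]
    (hρ : ∀ v, Continuous fun g => ρ g v) (B : V →L[ℂ] V) :
    Integrable (fun g => LinearMap.trace ℂ V ((ρ g : V →L[ℂ] V) ∘L B) •
      (((ρ g)⁻¹ : V ≃L[ℂ] V) : V →L[ℂ] V)) μ :=
  (((ContinuousLinearMap.traceCLM ℂ V).continuous.comp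
    ((ρ.continuous_toContinuousLinearMap hρ).clm_comp continuous_const)).smul
    (ρ.continuous_inv_toContinuousLinearMap hρ)).integrable_of_compactSpace

theorem conjAverage_eq_trace_div_finrank_smul_one [IsProbabilityMeasure μ]
    [μ.IsMulRightInvariant] [Nontrivial V] (hρ : ∀ v, Continuous fun g => ρ g v)
    (hirr : ∀ U : Submodule ℂ V, (∀ g : G, ∀ v ∈ U, ρ g v ∈ U) → U = ⊥ ∨ U = ⊤)
    (A : V →L[ℂ] V) :
    ρ.conjAverage μ A = (LinearMap.trace ℂ V A / Module.finrank ℂ V) • 1 := by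
  obtain ⟨c, hc⟩ := Module.End.exists_eq_smul_one_of_forall_commute
    (fun g => (ρ g : Module.End ℂ V)) hirr (ρ.conjAverage μ A)
    (fun h => LinearMap.ext fun v => ρ.conjAverage_apply_map μ hρ A h v)
  have htr := ρ.trace_conjAverage μ hρ A
  rw [hc, map_smul, LinearMap.trace_one, smul_eq_mul] at htr
  have hn : (Module.finrank ℂ V : ℂ) ≠ 0 := Nat.cast_ne_zero.2 Module.finrank_pos.ne'
  apply ContinuousLinearMap.coe_injective
  rw [hc, eq_div_of_mul_eq hn htr]
  rfl

end MonoidHom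

theorem summation_loop_identity_general
    {G : Type*} [Group G] [TopologicalSpace G] [IsTopologicalGroup G]
    [CompactSpace G] [MeasurableSpace G] [BorelSpace G]
    (μ : Measure G) [μ.IsHaarMeasure] [IsProbabilityMeasure μ]
    {V : Type*} [NormedAddCommGroup V] [NormedSpace ℂ V]
    [FiniteDimensional ℂ V] [Nontrivial V]
    (ρ : G →* (V ≃L[ℂ] V)) (hρ : ∀ v : V, Continuous fun g => ρ g v)
    (hirr : ∀ U : Submodule ℂ V, (∀ g : G, ∀ v ∈ U, ρ g v ∈ U) → U = ⊥ ∨ U = ⊤) :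
    ∀ B : V →L[ℂ] V,
      (∫ g, (LinearMap.trace ℂ V (((ρ g : V →L[ℂ] V).comp B : V →L[ℂ] V) : V →ₗ[ℂ] V)) •
          (((ρ g)⁻¹ : V ≃L[ℂ] V) : V →L[ℂ] V) ∂μ) =
        (1 / (Module.finrank ℂ V : ℂ)) • B := by
  intro B
  have := μ.isMulRightInvariant_of_isProbabilityMeasure
  let b := Module.finBasis ℂ V
  let rankOne (i) (v : V) : V →L[ℂ] V :=
    LinearMap.toContinuousLinearMap ((b.coord i).smulRight v)
  ext v
  calc _ = ∫ g, ∑ i, (ρ g)⁻¹ (rankOne i v (ρ g (B (b i)))) ∂μ := by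
        rw [ContinuousLinearMap.integral_apply (ρ.integrable_trace_comp_smul_inv μ hρ B)]
        congr 1 with g
        simp [rankOne, LinearMap.trace_eq_sum_coord b, Finset.sum_smul]
    _ = ∑ i, ρ.conjAverage μ (rankOne i v) (B (b i)) := by
        simp only [ρ.conjAverage_apply μ hρ]
        exact integral_finsetSum _ fun i _ =>
          (ρ.integrable_conj μ hρ (rankOne i v)).apply_continuousLinearMap (B (b i))
    _ = ∑ i, (b.coord i v / Module.finrank ℂ V) • B (b i) := by
        simp [ρ.conjAverage_eq_trace_div_finrank_smul_one μ hρ hirr, rankOne]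
    _ = _ := by
        rw [one_div]
        simp_rw [div_eq_inv_mul, mul_smul, ← Finset.smul_sum, ← map_smul, ← map_sum,
          b.coord_apply, b.sum_repr]
        rfl

/-- The 'summation/loop' identity: for a continuous irreducible representation
`ρ` of a compact group `G` on a nonzero finite-dimensional complex normed
space `V` and any linear map `B : V → V`,
`∫ Tr(ρ(g) ∘ B) • ρ(g)⁻¹ dμ(g) = (1 / dim V) • B`. -/
theorem summation_loop_identity
    {G : Type*} [Group G] [TopologicalSpace G] [IsTopologicalGroup G]
    [CompactSpace G] [T2Space G] [MeasurableSpace G] [BorelSpace G]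
    (μ : Measure G) [μ.IsHaarMeasure] [IsProbabilityMeasure μ]
    {V : Type*} [NormedAddCommGroup V] [NormedSpace ℂ V]
    [FiniteDimensional ℂ V] [Nontrivial V]
    (ρ : G →* (V ≃L[ℂ] V)) (hρ : ∀ v : V, Continuous fun g => ρ g v)
    (hirr : ∀ U : Submodule ℂ V, (∀ g : G, ∀ v ∈ U, ρ g v ∈ U) → U = ⊥ ∨ U = ⊤) :
    ∀ B : V →L[ℂ] V,
      (∫ g, (LinearMap.trace ℂ V (((ρ g : V →L[ℂ] V).comp B : V →L[ℂ] V) : V →ₗ[ℂ] V)) •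
          (((ρ g)⁻¹ : V ≃L[ℂ] V) : V →L[ℂ] V) ∂μ) =
        (1 / (Module.finrank ℂ V : ℂ)) • B :=
  summation_loop_identity_general μ ρ hρ hirr
end
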